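/- For every φ ∈ C_c^∞(ℝ³;ℂ), the Coulomb self-energy of ρ = |φ|² satisfies ∬_{ℝ³×ℝ³} |φ(x)|²|φ(y)|²/|x−y| dx dy ≤ 2 ‖φ‖_{L²}³ ‖∇φ‖_{L²}. -/

import Mathlib

open MeasureTheory Filter Complex
open scoped ENNReal Topology RealInnerProductSpace

noncomputable section

abbrev E3 := EuclideanSpace ℝ (Fin 3)

/-- `j`-th component of the gradient of `φ`. -/
def grad (φ : E3 → ℂ) (x : E3) (j : Fin 3) : ℂ :=
  fderiv ℝ φ x (EuclideanSpace.single j 1)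

/-- `|∇φ(x)|²`. -/
def gradNormSq (φ : E3 → ℂ) (x : E3) : ℝ :=
  ∑ j : Fin 3, ‖grad φ x j‖ ^ 2

/-- `|(-i∇ + A)φ(x)|²`. -/
def magKin (A : E3 → E3) (φ : E3 → ℂ) (x : E3) : ℝ :=
  ∑ j : Fin 3, ‖-Complex.I * grad φ x j + (A x j : ℂ) * φ x‖ ^ 2

/-- Coulomb self energy `∬ |φ(x)|²|φ(y)|²/|x-y| dx dy`. -/
def coulomb (φ : E3 → ℂ) : ℝ :=
  ∫ x, ∫ y, ‖φ x‖ ^ 2 * ‖φ y‖ ^ 2 / ‖x - y‖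

/-- The Pekar functional `𝓔_μ(A,V,φ)`. -/
def pekarF (A : E3 → E3) (V : E3 → ℝ) (μ : ℝ) (φ : E3 → ℂ) : ℝ :=
  (∫ x, (magKin A φ x + V x * ‖φ x‖ ^ 2)) - μ * coulomb φ

/-- Test functions: smooth and compactly supported. -/
def IsTest (φ : E3 → ℂ) : Prop := ContDiff ℝ (⊤ : ℕ∞) φ ∧ HasCompactSupport φ

/-- Pekar energy `E_P(A,V,μ)`. -/
def pekarEnergy (A : E3 → E3) (V : E3 → ℝ) (μ : ℝ) : ℝ :=
  sInf { e : ℝ | ∃ φ : E3 → ℂ, IsTest φ ∧ (∫ x, ‖φ x‖ ^ 2) = 1 ∧ e = pekarF A V μ φ }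

/-- `E_P := E_P(0,0,1)`. -/
def E_P : ℝ := pekarEnergy 0 0 1

/-- Local `L^p` membership of a scalar potential. -/
def LocLp (f : E3 → ℝ) (p : ℝ) : Prop :=
  ∀ K : Set E3, IsCompact K → IntegrableOn (fun x => |f x| ^ p) K volume

/-- Local `L³` membership of a vector potential. -/
def LocL3vec (A : E3 → E3) : Prop :=
  ∀ K : Set E3, IsCompact K → IntegrableOn (fun x => ‖A x‖ ^ (3 : ℝ)) K volume

/-- Weakly rescaled vector potential `A_{α⁻¹}(x) = α⁻¹ A(x/α)`. -/
def Ainv (A : E3 → E3) (α : ℝ) : E3 → E3 := fun x => α⁻¹ • A (α⁻¹ • x)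

/-- Weakly rescaled scalar potential `V_{α⁻¹}(x) = α⁻² V(x/α)`. -/
def Vinv (V : E3 → ℝ) (α : ℝ) : E3 → ℝ := fun x => α⁻¹ ^ 2 * V (α⁻¹ • x)

/-- Strongly rescaled vector potential `A_α(x) = α A(αx)`. -/
def Ascl (A : E3 → E3) (α : ℝ) : E3 → E3 := fun x => α • A (α • x)

/-- Strongly rescaled scalar potential `V_α(x) = α² V(αx)`. -/
def Vscl (V : E3 → ℝ) (α : ℝ) : E3 → ℝ := fun x => α ^ 2 * V (α • x)


namespace CAux

def sE (x : E3) (ε : ℝ) (y : E3) : ℝ := Real.sqrt ((∑ i, ((y - x) i) ^ 2) + ε ^ 2)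
def sD (x : E3) (ε : ℝ) (y : E3) : E3 →L[ℝ] ℝ :=
  (1 / (2 * sE x ε y)) • (∑ i : Fin 3, (2 * (y - x) i) • (EuclideanSpace.proj (𝕜 := ℝ) i))
def vj (x : E3) (ε : ℝ) (j : Fin 3) (y : E3) : ℝ := (y - x) j / sE x ε y

lemma norm_sq_eq (v : E3) : ‖v‖ ^ 2 = ∑ i, (v i) ^ 2 := by
  rw [EuclideanSpace.norm_eq, Real.sq_sqrt (by positivity)]
  simp [sq_abs]

lemma sE_eq (x : E3) (ε : ℝ) (y : E3) : sE x ε y = Real.sqrt (‖y - x‖ ^ 2 + ε ^ 2) := by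
  rw [sE, norm_sq_eq]

variable {x : E3} {ε : ℝ}

lemma hasFDerivAt_coord (x : E3) (i : Fin 3) (y : E3) :
    HasFDerivAt (fun y : E3 => (y - x) i) (EuclideanSpace.proj (𝕜 := ℝ) i) y := by
  exact ((EuclideanSpace.proj (𝕜 := ℝ) i).hasFDerivAt (x := y)).sub_const (x i)

variable (hε : 0 < ε)
include hε

lemma sE_pos (y : E3) : 0 < sE x ε y :=
  Real.sqrt_pos.2 (by positivity)

lemma sq_sE (y : E3) : (sE x ε y) ^ 2 = ‖y - x‖ ^ 2 + ε ^ 2 := by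
  rw [sE_eq]; exact Real.sq_sqrt (by positivity)

lemma norm_le_sE (y : E3) : ‖y - x‖ ≤ sE x ε y := by
  nlinarith [sq_sE (x := x) hε y, sE_pos (x := x) hε y, norm_nonneg (y - x)]

lemma eps_le_sE (y : E3) : ε ≤ sE x ε y := by
  nlinarith [sq_sE (x := x) hε y, sE_pos (x := x) hε y, norm_nonneg (y - x)]

omit hε
lemma continuous_sE : Continuous (sE x ε) := by
  apply Real.continuous_sqrt.comp
  fun_prop
include hε

lemma continuous_vj (j : Fin 3) : Continuous (vj x ε j) := by
  apply Continuous.div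
  · fun_prop
  · exact continuous_sE
  · exact fun y => (sE_pos hε y).ne'

lemma hasFDerivAt_sE (y : E3) : HasFDerivAt (sE x ε) (sD x ε y) y := by
  have hn : HasFDerivAt (fun y : E3 => (∑ i, ((y - x) i) ^ 2) + ε ^ 2)
      (∑ i : Fin 3, (2 * (y - x) i) • (EuclideanSpace.proj (𝕜 := ℝ) i)) y := by
    apply HasFDerivAt.add_const
    have : ∀ i : Fin 3, HasFDerivAt (fun y : E3 => ((y - x) i) ^ 2)
        ((2 * (y - x) i) • (EuclideanSpace.proj (𝕜 := ℝ) i)) y := by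
      intro i
      have h1 := hasFDerivAt_coord x i y
      simpa only [sq, two_mul, add_smul, Pi.mul_def] using h1.mul h1
    simpa using HasFDerivAt.fun_sum (fun i (_ : i ∈ Finset.univ) => this i)
  have hpos : (∑ i, ((y - x) i) ^ 2) + ε ^ 2 ≠ 0 := by positivity
  exact hn.sqrt hpos

lemma hasFDerivAt_vj (j : Fin 3) (y : E3) :
    HasFDerivAt (vj x ε j)
      ((y - x) j • ((-(sE x ε y ^ 2)⁻¹) • sD x ε y) + (sE x ε y)⁻¹ • (EuclideanSpace.proj (𝕜 := ℝ) j)) y := by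
  have hinv : HasFDerivAt (fun z => (sE x ε z)⁻¹) ((-(sE x ε y ^ 2)⁻¹) • sD x ε y) y := by
    have h := HasDerivAt.comp_hasFDerivAt (x := y)
      (hasDerivAt_inv (sE_pos (x := x) hε y).ne') (hasFDerivAt_sE (x := x) hε y)
    exact h
  have hmul := (hasFDerivAt_coord x j y).mul hinv
  have heq : vj x ε j = fun z => (z - x) j * (sE x ε z)⁻¹ := by
    funext z; rw [vj, div_eq_mul_inv]
  rw [heq]; exact hmul
end CAux

namespace CAux
variable {x : E3} {ε : ℝ} (hε : 0 < ε)
include hε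

lemma sD_apply_single (y : E3) (j : Fin 3) :
    sD x ε y (EuclideanSpace.single j 1) = (y - x) j / sE x ε y := by
  rw [sD]
  have hproj : ∀ i : Fin 3, (EuclideanSpace.proj (𝕜 := ℝ) i) (EuclideanSpace.single j (1:ℝ))
      = if i = j then 1 else 0 := by
    intro i; simp [EuclideanSpace.proj, EuclideanSpace.single_apply]
  simp only [ContinuousLinearMap.coe_smul', Pi.smul_apply, ContinuousLinearMap.sum_apply,
    ContinuousLinearMap.smul_apply, hproj, smul_eq_mul, mul_ite, mul_one, mul_zero,
    Finset.sum_ite_eq', Finset.mem_univ, if_true]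
  have := (sE_pos (x := x) hε y).ne'
  field_simp

lemma lineDeriv_vj (j : Fin 3) (y : E3) :
    lineDeriv ℝ (vj x ε j) y (EuclideanSpace.single j 1)
      = 1 / sE x ε y - ((y - x) j) ^ 2 / (sE x ε y) ^ 3 := by
  have h := hasFDerivAt_vj (x := x) hε j y
  rw [h.differentiableAt.lineDeriv_eq_fderiv, h.fderiv]
  have hs := (sE_pos (x := x) hε y).ne'
  simp only [ContinuousLinearMap.add_apply, ContinuousLinearMap.smul_apply,
    sD_apply_single hε, smul_eq_mul]
  have hproj : (EuclideanSpace.proj (𝕜 := ℝ) j) (EuclideanSpace.single j (1:ℝ)) = 1 := by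
    simp [EuclideanSpace.proj, EuclideanSpace.single_apply]
  rw [hproj]
  field_simp
  ring

end CAux

namespace CAux
variable {x : E3} {ε : ℝ} (hε : 0 < ε)

lemma abs_coord_le (v : E3) (j : Fin 3) : |v j| ≤ ‖v‖ := by
  rw [← Real.sqrt_sq_eq_abs, ← Real.sqrt_sq (norm_nonneg v)]
  apply Real.sqrt_le_sqrt
  rw [norm_sq_eq]
  exact Finset.single_le_sum (f := fun i => (v i) ^ 2) (fun i _ => sq_nonneg _) (Finset.mem_univ j)

include hε

lemma sE_lipschitz (y z : E3) : |sE x ε y - sE x ε z| ≤ ‖y - z‖ := by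
  have key : ∀ y z : E3, sE x ε y - sE x ε z ≤ ‖y - z‖ := by
    intro y z
    set d := ‖y - z‖ with hd
    have hd0 : 0 ≤ d := norm_nonneg _
    have hsy := sE_pos (x := x) hε y
    have hsz := sE_pos (x := x) hε z
    have hy2 : sE x ε y ^ 2 = ‖y - x‖ ^ 2 + ε ^ 2 := sq_sE hε y
    have hz2 : sE x ε z ^ 2 = ‖z - x‖ ^ 2 + ε ^ 2 := sq_sE hε z
    have hbz : ‖z - x‖ ≤ sE x ε z := norm_le_sE hε z
    have htri : ‖y - x‖ ≤ ‖z - x‖ + d := by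
      have : y - x = (y - z) + (z - x) := by abel
      rw [this]
      simpa [hd, add_comm] using norm_add_le (y - z) (z - x)
    have hsq : sE x ε y ^ 2 ≤ (sE x ε z + d) ^ 2 := by
      nlinarith [norm_nonneg (y - x), norm_nonneg (z - x)]
    have := le_of_pow_le_pow_left₀ (two_ne_zero) (by linarith : (0:ℝ) ≤ sE x ε z + d) hsq
    linarith
  rw [abs_sub_le_iff]
  exact ⟨key y z, by simpa [norm_sub_rev] using key z y⟩

lemma vj_lipschitz (j : Fin 3) : LipschitzWith (2 / ε).toNNReal (vj x ε j) := by
  apply LipschitzWith.of_dist_le_mul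
  intro y z
  rw [Real.coe_toNNReal _ (by positivity), Real.dist_eq, dist_eq_norm]
  set A := (y - x) j
  set B := (z - x) j
  set sy := sE x ε y with hsy
  set sz := sE x ε z with hsz
  have hsy0 : 0 < sy := sE_pos hε y
  have hsz0 : 0 < sz := sE_pos hε z
  have hey : ε ≤ sy := eps_le_sE hε y
  have hez : ε ≤ sz := eps_le_sE hε z
  have hB : |B| ≤ sz := le_trans (abs_coord_le (z - x) j) (norm_le_sE hε z)
  have hAB : |A - B| ≤ ‖y - z‖ := by
    have h7 : (y - x) - (z - x) = y - z := sub_sub_sub_cancel_right y z x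
    have h8 : A - B = (y - z) j := by
      calc A - B = ((y - x) - (z - x)) j := by simp [A, B]
        _ = (y - z) j := by rw [h7]
    rw [h8]; exact abs_coord_le _ _
  have hss : |sy - sz| ≤ ‖y - z‖ := sE_lipschitz hε y z
  have alg : ∀ (A B sy sz : ℝ), sy ≠ 0 → sz ≠ 0 →
      A / sy - B / sz = (A - B) / sy + B * (sz - sy) / (sy * sz) := by
    intros A B sy sz h1 h2; field_simp; ring
  have key : vj x ε j y - vj x ε j z = (A - B) / sy + B * (sz - sy) / (sy * sz) :=
    alg A B sy sz hsy0.ne' hsz0.ne'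
  rw [key]
  have h1 : |(A - B) / sy| ≤ ‖y - z‖ / ε := by
    rw [abs_div, abs_of_pos hsy0]
    exact div_le_div₀ (norm_nonneg _) hAB hε hey
  have h2 : |B * (sz - sy) / (sy * sz)| ≤ ‖y - z‖ / ε := by
    rw [abs_div, abs_mul, abs_of_pos (mul_pos hsy0 hsz0)]
    rw [div_le_div_iff₀ (mul_pos hsy0 hsz0) hε]
    have hzy : |sz - sy| ≤ ‖y - z‖ := by rw [abs_sub_comm]; exact hss
    calc |B| * |sz - sy| * ε ≤ sz * ‖y - z‖ * sy :=
          mul_le_mul (mul_le_mul hB hzy (abs_nonneg _) (le_of_lt hsz0))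
            hey (le_of_lt hε) (by positivity)
      _ = ‖y - z‖ * (sy * sz) := by ring
  calc |(A - B) / sy + B * (sz - sy) / (sy * sz)|
      ≤ |(A - B) / sy| + |B * (sz - sy) / (sy * sz)| := abs_add_le _ _
    _ ≤ ‖y - z‖ / ε + ‖y - z‖ / ε := add_le_add h1 h2
    _ = 2 / ε * ‖y - z‖ := by ring
end CAux

namespace CAux

def u (φ : E3 → ℂ) (y : E3) : ℝ := ‖φ y‖ ^ 2
def dU (φ : E3 → ℂ) (y : E3) (j : Fin 3) : ℝ :=
  2 * ((φ y).re * (grad φ y j).re + (φ y).im * (grad φ y j).im)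
def B (φ : E3 → ℂ) (y : E3) : ℝ := 2 * ‖φ y‖ * Real.sqrt (gradNormSq φ y)

lemma normsq_c (z : ℂ) : ‖z‖ ^ 2 = z.re ^ 2 + z.im ^ 2 := by
  rw [Complex.sq_norm, Complex.normSq_apply]; ring

lemma u_nonneg (φ : E3 → ℂ) (y : E3) : 0 ≤ u φ y := sq_nonneg _
lemma gns_nonneg (φ : E3 → ℂ) (y : E3) : 0 ≤ gradNormSq φ y :=
  Finset.sum_nonneg fun _ _ => sq_nonneg _
lemma B_nonneg (φ : E3 → ℂ) (y : E3) : 0 ≤ B φ y := by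
  rw [B]; positivity

variable {φ : E3 → ℂ} (hsm : ContDiff ℝ (⊤ : ℕ∞) φ) (hsupp : HasCompactSupport φ)

lemma u_eq : u φ = fun y => (φ y).re ^ 2 + (φ y).im ^ 2 := by
  funext y; rw [u, normsq_c]

include hsm

lemma contDiff_u : ContDiff ℝ (⊤ : ℕ∞) (u φ) := by
  rw [u_eq]
  exact ((Complex.reCLM.contDiff.comp hsm).pow 2).add ((Complex.imCLM.contDiff.comp hsm).pow 2)

lemma continuous_u : Continuous (u φ) := (contDiff_u hsm).continuous

lemma continuous_grad (j : Fin 3) : Continuous fun y => grad φ y j :=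
  (hsm.continuous_fderiv (by simp)).clm_apply continuous_const

lemma continuous_gns : Continuous (gradNormSq φ) := by
  apply continuous_finset_sum
  exact fun j _ => ((continuous_grad hsm j).norm.pow 2)

lemma continuous_dU (j : Fin 3) : Continuous fun y => dU φ y j := by
  unfold dU
  have h1 := Complex.continuous_re.comp hsm.continuous
  have h2 := Complex.continuous_im.comp hsm.continuous
  have h3 := Complex.continuous_re.comp (continuous_grad hsm j)
  have h4 := Complex.continuous_im.comp (continuous_grad hsm j)
  fun_prop

lemma continuous_B : Continuous (B φ) := by
  unfold B
  exact (continuous_const.mul hsm.continuous.norm).mul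
    ((continuous_gns hsm).sqrt)

omit hsm
include hsupp

lemma hcs_of_factor (f : E3 → ℝ) (h : ∀ y, φ y = 0 → f y = 0) : HasCompactSupport f := by
  apply hsupp.mono
  intro y hy
  simp only [Function.mem_support] at hy ⊢
  intro h0
  exact hy (h y h0)

lemma u_hcs : HasCompactSupport (u φ) :=
  hcs_of_factor hsupp _ (fun y h0 => by rw [u, h0]; simp)

lemma B_hcs : HasCompactSupport (B φ) :=
  hcs_of_factor hsupp _ (fun y h0 => by rw [B, h0]; simp)

include hsm

lemma u_lipschitz : ∃ C, LipschitzWith C (u φ) :=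
  (contDiff_u hsm).lipschitzWith_of_hasCompactSupport (u_hcs hsupp) (by simp)

omit hsupp

lemma hasFDerivAt_u (y : E3) :
    HasFDerivAt (u φ)
      ((2 * (φ y).re) • (Complex.reCLM.comp (fderiv ℝ φ y)) +
       (2 * (φ y).im) • (Complex.imCLM.comp (fderiv ℝ φ y))) y := by
  have hφd : HasFDerivAt φ (fderiv ℝ φ y) y :=
    (hsm.differentiable (by simp) y).hasFDerivAt
  have hp : HasFDerivAt (fun z => (φ z).re) (Complex.reCLM.comp (fderiv ℝ φ y)) y :=
    (Complex.reCLM.hasFDerivAt).comp y hφd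
  have hq : HasFDerivAt (fun z => (φ z).im) (Complex.imCLM.comp (fderiv ℝ φ y)) y :=
    (Complex.imCLM.hasFDerivAt).comp y hφd
  have hpp := hp.mul hp
  have hqq := hq.mul hq
  have := hpp.add hqq
  rw [u_eq]
  simpa only [sq, two_mul, add_smul, Pi.mul_def, Pi.add_def] using this

lemma lineDeriv_u (y : E3) (j : Fin 3) :
    lineDeriv ℝ (u φ) y (EuclideanSpace.single j 1) = dU φ y j := by
  have h := hasFDerivAt_u hsm y
  rw [h.differentiableAt.lineDeriv_eq_fderiv, h.fderiv]
  simp only [ContinuousLinearMap.add_apply, ContinuousLinearMap.smul_apply,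
    ContinuousLinearMap.comp_apply, smul_eq_mul]
  rw [dU]
  simp only [grad, Complex.reCLM_apply, Complex.imCLM_apply]
  ring

lemma lineDeriv_u_neg (y : E3) (j : Fin 3) :
    lineDeriv ℝ (u φ) y (-(EuclideanSpace.single j 1)) = -dU φ y j := by
  have h := hasFDerivAt_u hsm y
  rw [h.differentiableAt.lineDeriv_eq_fderiv, map_neg,
    ← h.differentiableAt.lineDeriv_eq_fderiv, lineDeriv_u hsm y j]
end CAux

namespace CAux
variable {φ : E3 → ℂ} (hsm : ContDiff ℝ (⊤ : ℕ∞) φ) (hsupp : HasCompactSupport φ)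
variable {x : E3} {ε : ℝ} (hε : 0 < ε)

include hε

lemma sum_vj_sq_le (y : E3) : ∑ j : Fin 3, (vj x ε j y) ^ 2 ≤ 1 := by
  have hs := sE_pos (x := x) hε y
  have h1 : ∑ j : Fin 3, (vj x ε j y) ^ 2 = (∑ j : Fin 3, ((y - x) j) ^ 2) / (sE x ε y) ^ 2 := by
    rw [Finset.sum_div]
    refine Finset.sum_congr rfl fun j _ => ?_
    rw [vj, div_pow]
  rw [h1, div_le_one (by positivity), ← norm_sq_eq]
  nlinarith [sq_sE (x := x) hε y, sq_nonneg ε, hε]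

lemma dU_sq_le (y : E3) (j : Fin 3) :
    (dU φ y j) ^ 2 ≤ 4 * ‖φ y‖ ^ 2 * ‖grad φ y j‖ ^ 2 := by
  rw [dU, normsq_c (φ y), normsq_c (grad φ y j)]
  nlinarith [sq_nonneg ((φ y).re * (grad φ y j).im - (φ y).im * (grad φ y j).re)]

lemma abs_sum_dU_vj_le (y : E3) : |∑ j : Fin 3, dU φ y j * vj x ε j y| ≤ B φ y := by
  have step1 : |∑ j : Fin 3, dU φ y j * vj x ε j y|
      ≤ ∑ j : Fin 3, |dU φ y j| * |vj x ε j y| := by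
    refine (Finset.abs_sum_le_sum_abs _ _).trans ?_
    refine Finset.sum_le_sum fun j _ => ?_
    rw [abs_mul]
  have step2 : ∑ j : Fin 3, |dU φ y j| * |vj x ε j y|
      ≤ Real.sqrt (∑ j : Fin 3, (dU φ y j) ^ 2) * Real.sqrt (∑ j : Fin 3, (vj x ε j y) ^ 2) := by
    have := Real.sum_mul_le_sqrt_mul_sqrt Finset.univ
      (fun j => |dU φ y j|) (fun j => |vj x ε j y|)
    simpa [sq_abs] using this
  have step3 : Real.sqrt (∑ j : Fin 3, (dU φ y j) ^ 2) ≤ 2 * ‖φ y‖ * Real.sqrt (gradNormSq φ y) := by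
    have h1 : ∑ j : Fin 3, (dU φ y j) ^ 2 ≤ (2 * ‖φ y‖) ^ 2 * gradNormSq φ y := by
      rw [gradNormSq, Finset.mul_sum]
      refine Finset.sum_le_sum fun j _ => ?_
      have := dU_sq_le (φ := φ) hε y j
      nlinarith [this]
    calc Real.sqrt (∑ j : Fin 3, (dU φ y j) ^ 2)
        ≤ Real.sqrt ((2 * ‖φ y‖) ^ 2 * gradNormSq φ y) := Real.sqrt_le_sqrt h1
      _ = 2 * ‖φ y‖ * Real.sqrt (gradNormSq φ y) := by
          rw [Real.sqrt_mul (sq_nonneg _), Real.sqrt_sq (by positivity)]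
  have step4 : Real.sqrt (∑ j : Fin 3, (vj x ε j y) ^ 2) ≤ 1 := by
    rw [show (1:ℝ) = Real.sqrt 1 by simp]
    exact Real.sqrt_le_sqrt (sum_vj_sq_le hε y)
  have hnn : 0 ≤ Real.sqrt (∑ j : Fin 3, (dU φ y j) ^ 2) := Real.sqrt_nonneg _
  calc |∑ j : Fin 3, dU φ y j * vj x ε j y|
      ≤ Real.sqrt (∑ j : Fin 3, (dU φ y j) ^ 2) * Real.sqrt (∑ j : Fin 3, (vj x ε j y) ^ 2) :=
        step1.trans step2
    _ ≤ (2 * ‖φ y‖ * Real.sqrt (gradNormSq φ y)) * 1 := by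
        apply mul_le_mul step3 step4 (Real.sqrt_nonneg _) (by positivity)
    _ = B φ y := by rw [B, mul_one]
end CAux

namespace CAux
variable {φ : E3 → ℂ} (hsm : ContDiff ℝ (⊤ : ℕ∞) φ) (hsupp : HasCompactSupport φ)
variable {x : E3} {ε : ℝ} (hε : 0 < ε)

lemma continuous_coord (x : E3) (j : Fin 3) : Continuous fun y : E3 => (y - x) j :=
  (EuclideanSpace.proj (𝕜 := ℝ) j).continuous.comp (continuous_id.sub continuous_const)

include hsm hsupp hε

lemma int_f1 (j : Fin 3) :
    Integrable (fun y => (1 / sE x ε y - ((y - x) j) ^ 2 / (sE x ε y) ^ 3) * u φ y) := by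
  apply Continuous.integrable_of_hasCompactSupport
  · apply Continuous.mul ?_ (continuous_u hsm)
    apply Continuous.sub
    · exact continuous_const.div continuous_sE (fun y => (sE_pos hε y).ne')
    · exact ((continuous_coord x j).pow 2).div (continuous_sE.pow 3)
        (fun y => pow_ne_zero 3 (sE_pos hε y).ne')
  · exact hcs_of_factor hsupp _ (fun y h0 => by simp [u, h0])

lemma int_f2 (j : Fin 3) : Integrable (fun y => dU φ y j * vj x ε j y) := by
  apply Continuous.integrable_of_hasCompactSupport
  · exact (continuous_dU hsm j).mul (continuous_vj hε j)
  · exact hcs_of_factor hsupp _ (fun y h0 => by simp [dU, h0])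

omit hε
lemma int_B : Integrable (B φ) :=
  (continuous_B hsm).integrable_of_hasCompactSupport (B_hcs hsupp)
include hε

lemma ibp :
    ∫ y, (3 / sE x ε y - ‖y - x‖ ^ 2 / (sE x ε y) ^ 3) * u φ y ≤ ∫ y, B φ y := by
  obtain ⟨C, hC⟩ := u_lipschitz hsm hsupp
  have key : ∀ j : Fin 3,
      (∫ y, (1 / sE x ε y - ((y - x) j) ^ 2 / (sE x ε y) ^ 3) * u φ y)
        = ∫ y, -dU φ y j * vj x ε j y := by
    intro j
    have h := LipschitzWith.integral_lineDeriv_mul_eq (μ := volume) (vj_lipschitz (x := x) hε j) hC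
      (u_hcs hsupp) (EuclideanSpace.single j 1)
    simp_rw [lineDeriv_vj hε j, lineDeriv_u_neg hsm] at h
    exact h
  have hsum_eq : (∫ y, (3 / sE x ε y - ‖y - x‖ ^ 2 / (sE x ε y) ^ 3) * u φ y)
      = ∑ j : Fin 3, ∫ y, (1 / sE x ε y - ((y - x) j) ^ 2 / (sE x ε y) ^ 3) * u φ y := by
    rw [← integral_finset_sum _ (fun j _ => int_f1 hsm hsupp hε j)]
    apply integral_congr_ae
    filter_upwards with y
    rw [← Finset.sum_mul]
    congr 1
    rw [Finset.sum_sub_distrib]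
    simp only [Finset.sum_const, Finset.card_univ, Fintype.card_fin, nsmul_eq_mul]
    rw [← Finset.sum_div, ← norm_sq_eq]
    ring
  rw [hsum_eq]
  have hstep : ∀ j : Fin 3, ∫ y, -dU φ y j * vj x ε j y = -∫ y, dU φ y j * vj x ε j y := by
    intro j
    simp_rw [neg_mul]
    exact integral_neg _
  calc ∑ j : Fin 3, ∫ y, (1 / sE x ε y - ((y - x) j) ^ 2 / (sE x ε y) ^ 3) * u φ y
      = ∑ j : Fin 3, ∫ y, -dU φ y j * vj x ε j y := Finset.sum_congr rfl (fun j _ => key j)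
    _ = ∫ y, ∑ j : Fin 3, -dU φ y j * vj x ε j y := by
        rw [integral_finset_sum]
        exact fun j _ => ((int_f2 hsm hsupp hε j).neg').congr (by filter_upwards with y; ring)
    _ ≤ ∫ y, B φ y := by
        apply integral_mono ?_ (int_B hsm hsupp) ?_
        · apply integrable_finset_sum
          exact fun j _ => ((int_f2 hsm hsupp hε j).neg').congr (by filter_upwards with y; ring)
        · intro y
          show ∑ j : Fin 3, -dU φ y j * vj x ε j y ≤ B φ y
          have h1 := abs_sum_dU_vj_le (φ := φ) (x := x) hε y
          have h2 : ∑ j : Fin 3, -dU φ y j * vj x ε j y = -(∑ j : Fin 3, dU φ y j * vj x ε j y) := by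
            rw [← Finset.sum_neg_distrib]
            exact Finset.sum_congr rfl fun j _ => by ring
          rw [h2]
          have := neg_abs_le (∑ j : Fin 3, dU φ y j * vj x ε j y)
          linarith
end CAux

namespace CAux
open Filter ENNReal
variable {φ : E3 → ℂ} (hsm : ContDiff ℝ (⊤ : ℕ∞) φ) (hsupp : HasCompactSupport φ)
variable {x : E3} {ε : ℝ} (hε : 0 < ε)

include hsm hsupp hε

lemma int_g : Integrable (fun y => u φ y * ‖y - x‖ ^ 2 / (sE x ε y) ^ 3) := by
  apply Continuous.integrable_of_hasCompactSupport
  · exact ((continuous_u hsm).mul ((continuous_id.sub continuous_const).norm.pow 2)).div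
      (continuous_sE.pow 3) (fun y => pow_ne_zero 3 (sE_pos hε y).ne')
  · exact hcs_of_factor hsupp _ (fun y h0 => by simp [u, h0])

lemma int_f3 : Integrable (fun y => (3 / sE x ε y - ‖y - x‖ ^ 2 / (sE x ε y) ^ 3) * u φ y) := by
  apply Continuous.integrable_of_hasCompactSupport
  · apply Continuous.mul ?_ (continuous_u hsm)
    apply Continuous.sub
    · exact continuous_const.div continuous_sE (fun y => (sE_pos hε y).ne')
    · exact ((continuous_id.sub continuous_const).norm.pow 2).div (continuous_sE.pow 3)
        (fun y => pow_ne_zero 3 (sE_pos hε y).ne')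
  · exact hcs_of_factor hsupp _ (fun y h0 => by simp [u, h0])

lemma eps_bound :
    ∫ y, u φ y * ‖y - x‖ ^ 2 / (sE x ε y) ^ 3 ≤ (∫ y, B φ y) / 2 := by
  have hpt : ∀ y, 2 * (u φ y * ‖y - x‖ ^ 2 / (sE x ε y) ^ 3)
      ≤ (3 / sE x ε y - ‖y - x‖ ^ 2 / (sE x ε y) ^ 3) * u φ y := by
    intro y
    have hs := sE_pos (x := x) hε y
    have hsq := sq_sE (x := x) hε y
    have hu := u_nonneg φ y
    have hdiff : (3 / sE x ε y - ‖y - x‖ ^ 2 / (sE x ε y) ^ 3) * u φ y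
        - 2 * (u φ y * ‖y - x‖ ^ 2 / (sE x ε y) ^ 3)
        = (3 * (sE x ε y) ^ 2 - 3 * ‖y - x‖ ^ 2) * u φ y / (sE x ε y) ^ 3 := by
      field_simp
      ring
    have h9 : 3 * (sE x ε y) ^ 2 - 3 * ‖y - x‖ ^ 2 = 3 * ε ^ 2 := by
      rw [hsq]; ring
    rw [h9] at hdiff
    have : 0 ≤ 3 * ε ^ 2 * u φ y / (sE x ε y) ^ 3 := by positivity
    linarith
  have h2 : 2 * ∫ y, u φ y * ‖y - x‖ ^ 2 / (sE x ε y) ^ 3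
      ≤ ∫ y, (3 / sE x ε y - ‖y - x‖ ^ 2 / (sE x ε y) ^ 3) * u φ y := by
    rw [← integral_const_mul]
    exact integral_mono ((int_g hsm hsupp hε).const_mul 2) (int_f3 hsm hsupp hε) hpt
  have h3 := ibp hsm hsupp hε (x := x)
  linarith
end CAux

namespace CAux
open Filter
variable {φ : E3 → ℂ} (hsm : ContDiff ℝ (⊤ : ℕ∞) φ) (hsupp : HasCompactSupport φ)

include hsm hsupp

lemma inner_bound (x : E3) :
    ∫ y, u φ y / ‖x - y‖ ≤ (∫ y, B φ y) / 2 := by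
  set DB := ∫ y, B φ y with hDB
  have hDB0 : 0 ≤ DB := integral_nonneg (fun y => B_nonneg φ y)
  set εn : ℕ → ℝ := fun n => 1 / ((n : ℝ) + 1) with hεn
  have hεn_pos : ∀ n, 0 < εn n := fun n => by positivity
  set g : ℕ → E3 → ℝ := fun n y => u φ y * ‖y - x‖ ^ 2 / (sE x (εn n) y) ^ 3 with hg
  have hg_nonneg : ∀ n y, 0 ≤ g n y := by
    intro n y
    have := sE_pos (x := x) (hεn_pos n) y
    exact div_nonneg (mul_nonneg (u_nonneg φ y) (pow_nonneg (norm_nonneg _) 2))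
      (pow_pos (sE_pos (x := x) (hεn_pos n) y) 3).le
  have hbound : ∀ n, ∫⁻ y, ENNReal.ofReal (g n y) ≤ ENNReal.ofReal (DB / 2) := by
    intro n
    rw [← ofReal_integral_eq_lintegral_ofReal (int_g hsm hsupp (hεn_pos n))
      (Eventually.of_forall (hg_nonneg n))]
    exact ENNReal.ofReal_le_ofReal (eps_bound hsm hsupp (hεn_pos n))
  have hae : ∀ᵐ y : E3, y ≠ x := by
    rw [ae_iff]
    simp only [ne_eq, not_not, Set.setOf_eq_eq_singleton]
    exact measure_singleton x
  have htend : ∀ y, y ≠ x → Tendsto (fun n => g n y) atTop (𝓝 (u φ y / ‖x - y‖)) := by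
    intro y hy
    have hw : ‖y - x‖ ≠ 0 := by
      simp only [ne_eq, norm_eq_zero, sub_eq_zero]
      exact hy
    have hw0 : 0 < ‖y - x‖ := lt_of_le_of_ne (norm_nonneg _) (Ne.symm hw)
    have h0 : Tendsto εn atTop (𝓝 0) := tendsto_one_div_add_atTop_nhds_zero_nat
    have hsE : Tendsto (fun n => sE x (εn n) y) atTop (𝓝 ‖y - x‖) := by
      have h0sq : Tendsto (fun n => (εn n) ^ 2) atTop (𝓝 0) := by
        simpa using h0.pow 2
      have h1 : Tendsto (fun n => ‖y - x‖ ^ 2 + (εn n) ^ 2) atTop (𝓝 (‖y - x‖ ^ 2 + 0)) :=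
        tendsto_const_nhds.add h0sq
      rw [add_zero] at h1
      have h2 := (Real.continuous_sqrt.tendsto _).comp h1
      simp only [Function.comp_def] at h2
      rw [Real.sqrt_sq (norm_nonneg _)] at h2
      simp_rw [sE_eq]
      exact h2
    have hlim : Tendsto (fun n => g n y) atTop
        (𝓝 (u φ y * ‖y - x‖ ^ 2 / ‖y - x‖ ^ 3)) := by
      apply Tendsto.div tendsto_const_nhds (hsE.pow 3) (pow_ne_zero 3 hw)
    have hw' : ‖x - y‖ ≠ 0 := by rw [norm_sub_rev]; exact hw
    have heq : u φ y * ‖y - x‖ ^ 2 / ‖y - x‖ ^ 3 = u φ y / ‖x - y‖ := by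
      have hcube : ‖x - y‖ ^ 3 = ‖x - y‖ ^ 2 * ‖x - y‖ := by ring
      rw [norm_sub_rev y x, hcube, ← div_div, mul_div_assoc,
        div_self (pow_ne_zero 2 hw'), mul_one]
    rw [heq] at hlim
    exact hlim
  have hliminf : ∀ᵐ y : E3, ENNReal.ofReal (u φ y / ‖x - y‖)
      = liminf (fun n => ENNReal.ofReal (g n y)) atTop := by
    filter_upwards [hae] with y hy
    exact ((ENNReal.continuous_ofReal.tendsto _).comp (htend y hy)).liminf_eq.symm
  have hmeas : ∀ n, Measurable fun y => ENNReal.ofReal (g n y) := by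
    intro n
    apply Measurable.ennreal_ofReal
    have hc : Continuous (g n) := by
      have := sE_pos (x := x) (hεn_pos n)
      exact ((continuous_u hsm).mul ((continuous_id.sub continuous_const).norm.pow 2)).div
        (continuous_sE.pow 3) (fun y => pow_ne_zero 3 (this y).ne')
    exact hc.measurable
  have hchain : ∫⁻ y, ENNReal.ofReal (u φ y / ‖x - y‖) ≤ ENNReal.ofReal (DB / 2) := by
    calc ∫⁻ y, ENNReal.ofReal (u φ y / ‖x - y‖)
        = ∫⁻ y, liminf (fun n => ENNReal.ofReal (g n y)) atTop := lintegral_congr_ae hliminf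
      _ ≤ liminf (fun n => ∫⁻ y, ENNReal.ofReal (g n y)) atTop := lintegral_liminf_le hmeas
      _ ≤ liminf (fun _ : ℕ => ENNReal.ofReal (DB / 2)) atTop :=
          liminf_le_liminf (Eventually.of_forall hbound)
      _ = ENNReal.ofReal (DB / 2) := liminf_const _
  have hmeasf : AEStronglyMeasurable (fun y => u φ y / ‖x - y‖) volume := by
    apply Measurable.aestronglyMeasurable
    exact ((continuous_u hsm).measurable).div ((continuous_const.sub continuous_id).norm.measurable)
  rw [integral_eq_lintegral_of_nonneg_ae
    (Eventually.of_forall (fun y => div_nonneg (u_nonneg φ y) (norm_nonneg _))) hmeasf]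
  exact ENNReal.toReal_le_of_le_ofReal (div_nonneg hDB0 (by norm_num)) hchain
end CAux


open CAux Filter in
/-- Coulomb self-energy bound `∬ |φ(x)|²|φ(y)|²/|x−y| ≤ 2‖φ‖₂³‖∇φ‖₂`. -/
theorem coulomb_self_energy_bound
    (φ : E3 → ℂ) (hφ : IsTest φ) :
    coulomb φ ≤
      2 * (∫ x, ‖φ x‖ ^ 2) ^ ((3 : ℝ)/2) * Real.sqrt (∫ x, gradNormSq φ x) := by
  obtain ⟨hsm, hsupp⟩ := hφ
  have int_u : Integrable (u φ) :=
    (continuous_u hsm).integrable_of_hasCompactSupport (u_hcs hsupp)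
  set M := ∫ y, u φ y with hM
  have hM0 : 0 ≤ M := integral_nonneg (u_nonneg φ)
  set DB := ∫ y, B φ y with hDB
  have hDB0 : 0 ≤ DB := integral_nonneg (B_nonneg φ)
  set G := Real.sqrt (∫ y, gradNormSq φ y) with hG
  have hG0 : 0 ≤ G := Real.sqrt_nonneg _
  -- Step A
  have hinner : ∀ x : E3, ∫ y, ‖φ x‖ ^ 2 * ‖φ y‖ ^ 2 / ‖x - y‖
      = u φ x * ∫ y, u φ y / ‖x - y‖ := by
    intro x
    rw [← integral_const_mul]
    apply integral_congr_ae
    filter_upwards with y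
    rw [u, u, mul_div_assoc]
  have hIx_nonneg : ∀ x : E3, 0 ≤ ∫ y, u φ y / ‖x - y‖ := fun x =>
    integral_nonneg (fun y => div_nonneg (u_nonneg φ y) (norm_nonneg _))
  have stepA : coulomb φ ≤ M * (DB / 2) := by
    rw [coulomb]
    have h1 : ∫ x, ∫ y, ‖φ x‖ ^ 2 * ‖φ y‖ ^ 2 / ‖x - y‖
        = ∫ x, u φ x * ∫ y, u φ y / ‖x - y‖ := by
      apply integral_congr_ae
      filter_upwards with x
      exact hinner x
    rw [h1]
    calc ∫ x, u φ x * ∫ y, u φ y / ‖x - y‖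
        ≤ ∫ x, u φ x * (DB / 2) := by
          apply integral_mono_of_nonneg
          · filter_upwards with x
            exact mul_nonneg (u_nonneg φ x) (hIx_nonneg x)
          · exact int_u.mul_const _
          · filter_upwards with x
            exact mul_le_mul_of_nonneg_left (inner_bound hsm hsupp x) (u_nonneg φ x)
      _ = M * (DB / 2) := by rw [integral_mul_const]
  -- Step B
  have int_gns : Integrable (gradNormSq φ) := by
    apply Continuous.integrable_of_hasCompactSupport (continuous_gns hsm)
    have h := (hsupp.fderiv ℝ).comp_left
      (g := fun T : E3 →L[ℝ] ℂ => ∑ j : Fin 3, ‖T (EuclideanSpace.single j 1)‖ ^ 2) (by simp)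
    exact h
  have stepB : DB / 2 ≤ Real.sqrt M * G := by
    have hBeq : DB = 2 * ∫ y, ‖φ y‖ * Real.sqrt (gradNormSq φ y) := by
      rw [hDB, ← integral_const_mul]
      apply integral_congr_ae
      filter_upwards with y
      rw [B]; ring
    have hpq : Real.HolderConjugate 2 2 := ⟨by norm_num, by norm_num, by norm_num⟩
    have hf_meas : AEStronglyMeasurable (fun y => ‖φ y‖) volume :=
      hsm.continuous.norm.aestronglyMeasurable
    have hg_meas : AEStronglyMeasurable (fun y => Real.sqrt (gradNormSq φ y)) volume :=
      ((continuous_gns hsm).sqrt).aestronglyMeasurable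
    have hf_mem : MemLp (fun y => ‖φ y‖) (ENNReal.ofReal 2) volume := by
      rw [show ENNReal.ofReal 2 = 2 by simp]
      rw [memLp_two_iff_integrable_sq hf_meas]
      exact int_u.congr (by filter_upwards with y; rw [u])
    have hg_mem : MemLp (fun y => Real.sqrt (gradNormSq φ y)) (ENNReal.ofReal 2) volume := by
      rw [show ENNReal.ofReal 2 = 2 by simp]
      rw [memLp_two_iff_integrable_sq hg_meas]
      exact int_gns.congr (by
        filter_upwards with y
        rw [Real.sq_sqrt (gns_nonneg φ y)])
    have hH := integral_mul_le_Lp_mul_Lq_of_nonneg hpq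
      (Eventually.of_forall fun y => norm_nonneg (φ y))
      (Eventually.of_forall fun y => Real.sqrt_nonneg _) hf_mem hg_mem
    have he1 : ∫ y, ‖φ y‖ ^ (2:ℝ) = M := by
      rw [hM]
      apply integral_congr_ae
      filter_upwards with y
      rw [u, ← Real.rpow_natCast ‖φ y‖ 2]
      norm_num
    have he2 : ∫ y, (Real.sqrt (gradNormSq φ y)) ^ (2:ℝ) = ∫ y, gradNormSq φ y := by
      apply integral_congr_ae
      filter_upwards with y
      rw [show ((2:ℝ)) = ((2:ℕ):ℝ) by norm_num, Real.rpow_natCast,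
        Real.sq_sqrt (gns_nonneg φ y)]
    rw [he1, he2] at hH
    rw [hBeq]
    calc (2 * ∫ y, ‖φ y‖ * Real.sqrt (gradNormSq φ y)) / 2
        = ∫ y, ‖φ y‖ * Real.sqrt (gradNormSq φ y) := by ring
      _ ≤ M ^ ((1:ℝ)/2) * (∫ y, gradNormSq φ y) ^ ((1:ℝ)/2) := hH
      _ = Real.sqrt M * G := by rw [hG, Real.sqrt_eq_rpow, Real.sqrt_eq_rpow]
  -- Step C
  have hfinal : M * (DB / 2) ≤ 2 * M ^ ((3:ℝ)/2) * G := by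
    have h32 : M ^ ((3:ℝ)/2) = M * Real.sqrt M := by
      rw [show (3:ℝ)/2 = 1 + 1/2 by norm_num, Real.rpow_add' hM0 (by norm_num),
        Real.rpow_one, ← Real.sqrt_eq_rpow]
    rw [h32]
    have h1 : M * (DB / 2) ≤ M * (Real.sqrt M * G) :=
      mul_le_mul_of_nonneg_left stepB hM0
    have h2 : 0 ≤ M * (Real.sqrt M * G) :=
      mul_nonneg hM0 (mul_nonneg (Real.sqrt_nonneg M) hG0)
    nlinarith
  have hMeq : (∫ x, ‖φ x‖ ^ 2) = M := by
    rw [hM]; apply integral_congr_ae; filter_upwards with y; rw [u]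
  rw [hMeq]
  calc coulomb φ ≤ M * (DB / 2) := stepA
    _ ≤ 2 * M ^ ((3:ℝ)/2) * G := hfinal
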